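/- (Theorem: centralized sum variance.) In the UBS sum sampling model with universe rate p satisfying max(ε₁, ε₂) ≤ p ≤ 1 and uniform rates q₁ = ε₁/p, q₂ = ε₂/p, the variance of the sum estimator equals Var(Ĵ_sum) = (1/ε₂ − 1/p)·β₁ + (1/ε₁ − 1/p)·β₂ + (p/(ε₁ε₂) − 1/ε₁ − 1/ε₂ + 1/p)·β₃ + (1/p − 1)·β₄, where β₁ = Σ_v (a v)² μ_v² (b v), β₂ = Σ_v (a v)(μ_v² + σ_v²)(b v)², β₃ = Σ_v (a v)(μ_v² + σ_v²)(b v), and β₄ = Σ_v (a v)² μ_v² (b v)². -/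

import Mathlib

/-!
Write the sampled-join sum as `S = ∑ v, X v` with `X v = U v * A v * B v`, where
`A v = ∑ i, ξ v i * w v i` and `B v = ∑ j, η v j`. Each `X v` is a function of the variables
carrying join key `v`, so the `X v` are independent and `Var S = ∑ v, Var (X v)`. Inside one
key the factors `U v`, `A v`, `B v` come from disjoint blocks of the independent family, hence
`Var (X v) = E[U²] E[A²] E[B²] - (E U · E A · E B)²` with `E[U²] = E U = p` because `U² = U`.
The two moments of a weighted sum of independent Bernoulli(q) variables are `q ∑ c` and
`q² (∑ c)² + (q - q²) ∑ c²`. Finally `∑ w = a μ`, `∑ w² = a (μ² + σ²)` and `εₖ = p qₖ`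
turn the result into the stated combination of `β₁, …, β₄`.
-/

open MeasureTheory ProbabilityTheory

/-- Mean `μ_v` of the weights attached to the tuples of the first table with join key `v`
(`0` when there are no such tuples). -/
noncomputable def wMean {ι : Type*} (a : ι → ℕ) (w : (v : ι) → Fin (a v) → ℝ) (v : ι) : ℝ :=
  (∑ i, w v i) / (a v)

/-- Population variance `σ_v²` of the weights attached to the tuples of the first table with
join key `v` (`0` when there are no such tuples). -/
noncomputable def wVar {ι : Type*} (a : ι → ℕ) (w : (v : ι) → Fin (a v) → ℝ) (v : ι) : ℝ :=
  (∑ i, (w v i - wMean a w v) ^ 2) / (a v)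

lemma measurable_iSup_comap {Ω κ β : Type*} [m : MeasurableSpace β] {F : κ → Ω → β}
    {S : Set κ} {k : κ} (hk : k ∈ S) : Measurable[⨆ k ∈ S, m.comap (F k)] (F k) :=
  measurable_iff_comap_le.2 (le_iSup₂ (f := fun k _ => m.comap (F k)) k hk)

lemma Fin.natCast_mul_sum_div {n : ℕ} (f : Fin n → ℝ) :
    (n : ℝ) * ((∑ i, f i) / n) = ∑ i, f i := by
  cases n with
  | zero => simp
  | succ n => field_simp

section Bernoulli

variable {Ω : Type*} [MeasurableSpace Ω] {μ : Measure Ω}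

structure IsBernoulli (f : Ω → ℝ) (q : ℝ) (μ : Measure Ω) : Prop where
  measurable : Measurable f
  zero_or_one : ∀ ω, f ω = 0 ∨ f ω = 1
  integral_eq : μ[f] = q

variable {f : Ω → ℝ} {q : ℝ}

lemma IsBernoulli.of_measure_eq (hf : Measurable f) (h01 : ∀ ω, f ω = 0 ∨ f ω = 1)
    (hq : 0 ≤ q) (h : μ {ω | f ω = 1} = ENNReal.ofReal q) : IsBernoulli f q μ := by
  refine ⟨hf, h01, ?_⟩
  have hf_ind : f = {ω | f ω = 1}.indicator 1 := by
    ext ω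
    rcases h01 ω with h | h <;> simp [h]
  rw [hf_ind, integral_indicator_one (s := {ω | f ω = 1}) (hf (measurableSet_singleton 1)),
    measureReal_def, h, ENNReal.toReal_ofReal hq]

namespace IsBernoulli

lemma sq_eq (hf : IsBernoulli f q μ) : f ^ 2 = f := by
  ext ω
  rcases hf.zero_or_one ω with h | h <;> simp [h]

lemma memLp (hf : IsBernoulli f q μ) [IsFiniteMeasure μ] (p : ENNReal) : MemLp f p μ := by
  refine (memLp_top_of_bound hf.measurable.aestronglyMeasurable 1
    (ae_of_all _ fun ω => ?_)).mono_exponent le_top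
  rcases hf.zero_or_one ω with h | h <;> simp [h]

lemma integrable (hf : IsBernoulli f q μ) [IsFiniteMeasure μ] : Integrable f μ :=
  (hf.memLp 1).integrable le_rfl

lemma variance_eq (hf : IsBernoulli f q μ) [IsProbabilityMeasure μ] :
    variance f μ = q - q ^ 2 := by
  rw [variance_eq_sub (hf.memLp 2), hf.sq_eq, hf.integral_eq]

end IsBernoulli

end Bernoulli

namespace ProbabilityTheory

variable {Ω : Type*} [MeasurableSpace Ω] {μ : Measure Ω}

lemma iIndepFun.indepFun_of_measurable_iSup {κ β : Type*} [m : MeasurableSpace β]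
    {F : κ → Ω → β} (hF : iIndepFun F μ) (hFm : ∀ k, Measurable (F k)) {S T : Set κ}
    (hST : Disjoint S T) {γ δ : Type*} [MeasurableSpace γ] [MeasurableSpace δ]
    {X : Ω → γ} {Y : Ω → δ} (hX : Measurable[⨆ k ∈ S, m.comap (F k)] X)
    (hY : Measurable[⨆ k ∈ T, m.comap (F k)] Y) :
    X ⟂ᵢ[μ] Y := by
  rw [IndepFun_iff_Indep]
  exact indep_of_indep_of_le_left (indep_of_indep_of_le_right
    (indep_iSup_of_disjoint (fun k => (hFm k).comap_le) hF.iIndep hST) hY.comap_le) hX.comap_le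

lemma IndepFun.integral_mul_sq {X Y : Ω → ℝ} (h : X ⟂ᵢ[μ] Y) (hX : AEStronglyMeasurable X μ)
    (hY : AEStronglyMeasurable Y μ) : μ[(X * Y) ^ 2] = μ[X ^ 2] * μ[Y ^ 2] := by
  have h_sq : (X ^ 2) ⟂ᵢ[μ] (Y ^ 2) := by
    exact h.comp (φ := fun x => x ^ 2) (ψ := fun x => x ^ 2) (measurable_id.pow_const 2)
      (measurable_id.pow_const 2)
  rw [mul_pow, h_sq.integral_mul_eq_mul_integral (hX.pow 2) (hY.pow 2)]

lemma IndepFun.variance_fun_sum {α : Type*} [Fintype α] {X : α → Ω → ℝ}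
    (hX : ∀ i, MemLp (X i) 2 μ) (hind : Pairwise fun i j => X i ⟂ᵢ[μ] X j) :
    variance (fun ω => ∑ i, X i ω) μ = ∑ i, variance (X i) μ := by
  rw [← IndepFun.variance_sum (fun i _ => hX i) (fun i _ j _ hij => hind hij)]
  congr 1
  ext ω
  simp

lemma variance_sum_mul_const {α : Type*} [Fintype α] {X : α → Ω → ℝ} (c : α → ℝ)
    (hX : ∀ i, MemLp (X i) 2 μ) (hind : Pairwise fun i j => X i ⟂ᵢ[μ] X j) :
    variance (fun ω => ∑ i, X i ω * c i) μ = ∑ i, variance (X i) μ * c i ^ 2 := by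
  rw [IndepFun.variance_fun_sum (fun i => (hX i).mul_const (c i))
    (fun i j hij => (hind hij).comp (measurable_mul_const (c i)) (measurable_mul_const (c j)))]
  simp only [variance_mul_const]

variable [IsProbabilityMeasure μ]

lemma IndepFun.variance_mul {X Y : Ω → ℝ} (h : X ⟂ᵢ[μ] Y) (hX : AEStronglyMeasurable X μ)
    (hY : AEStronglyMeasurable Y μ) (hXY : MemLp (X * Y) 2 μ) :
    variance (X * Y) μ = μ[X ^ 2] * μ[Y ^ 2] - (μ[X] * μ[Y]) ^ 2 := by
  rw [variance_eq_sub hXY, h.integral_mul_sq hX hY, h.integral_mul_eq_mul_integral hX hY]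

lemma variance_mul_mul_of_indepFun {U A B : Ω → ℝ} (hUAB : U ⟂ᵢ[μ] (A * B)) (hAB : A ⟂ᵢ[μ] B)
    (hU : AEStronglyMeasurable U μ) (hA : AEStronglyMeasurable A μ)
    (hB : AEStronglyMeasurable B μ) (h : MemLp (U * (A * B)) 2 μ) :
    variance (U * (A * B)) μ
      = μ[U ^ 2] * (μ[A ^ 2] * μ[B ^ 2]) - (μ[U] * (μ[A] * μ[B])) ^ 2 := by
  rw [hUAB.variance_mul hU (hA.mul hB) h, hAB.integral_mul_sq hA hB,
    hAB.integral_mul_eq_mul_integral hA hB]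

section BernoulliSum

variable {α : Type*} [Fintype α] {X : α → Ω → ℝ} {q : ℝ}

lemma integral_sum_mul_const_of_isBernoulli (c : α → ℝ) (hX : ∀ i, IsBernoulli (X i) q μ) :
    μ[fun ω => ∑ i, X i ω * c i] = q * ∑ i, c i := by
  rw [integral_finsetSum _ fun i _ => (hX i).integrable.mul_const (c i), Finset.mul_sum]
  simp only [integral_mul_const, (hX _).integral_eq]

lemma integral_sum_mul_const_sq_of_isBernoulli (c : α → ℝ) (hX : ∀ i, IsBernoulli (X i) q μ)
    (hind : Pairwise fun i j => X i ⟂ᵢ[μ] X j) :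
    μ[(fun ω => ∑ i, X i ω * c i) ^ 2]
      = q ^ 2 * (∑ i, c i) ^ 2 + (q - q ^ 2) * ∑ i, c i ^ 2 := by
  have h_memLp : MemLp (fun ω => ∑ i, X i ω * c i) 2 μ :=
    memLp_finsetSum _ fun i _ => ((hX i).memLp 2).mul_const (c i)
  have h_var := variance_eq_sub h_memLp
  rw [variance_sum_mul_const c (fun i => (hX i).memLp 2) hind,
    integral_sum_mul_const_of_isBernoulli c hX] at h_var
  simp only [(hX _).variance_eq, ← Finset.mul_sum] at h_var
  linear_combination -h_var

lemma integral_sum_of_isBernoulli (hX : ∀ i, IsBernoulli (X i) q μ) :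
    μ[fun ω => ∑ i, X i ω] = q * Fintype.card α := by
  simpa using integral_sum_mul_const_of_isBernoulli (fun _ => (1 : ℝ)) hX

lemma integral_sum_sq_of_isBernoulli (hX : ∀ i, IsBernoulli (X i) q μ)
    (hind : Pairwise fun i j => X i ⟂ᵢ[μ] X j) :
    μ[(fun ω => ∑ i, X i ω) ^ 2] = q ^ 2 * Fintype.card α ^ 2 + (q - q ^ 2) * Fintype.card α := by
  simpa using integral_sum_mul_const_sq_of_isBernoulli (fun _ => (1 : ℝ)) hX hind

end BernoulliSum

end ProbabilityTheory

section SampledJoin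

variable {Ω : Type*} [MeasurableSpace Ω] {μ : Measure Ω} {α β : Type*} [Fintype α] [Fintype β]

def sampledKeyTerm (U : Ω → ℝ) (ξ : α → Ω → ℝ) (η : β → Ω → ℝ) (c : α → ℝ) : Ω → ℝ :=
  fun ω => U ω * (∑ i, ξ i ω * c i) * ∑ j, η j ω

variable {U : Ω → ℝ} {ξ : α → Ω → ℝ} {η : β → Ω → ℝ} {p q₁ q₂ : ℝ}

lemma memLp_top_sampledKeyTerm [IsFiniteMeasure μ] (c : α → ℝ) (hU : IsBernoulli U p μ)
    (hξ : ∀ i, IsBernoulli (ξ i) q₁ μ) (hη : ∀ j, IsBernoulli (η j) q₂ μ) :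
    MemLp (sampledKeyTerm U ξ η c) ⊤ μ :=
  (memLp_finsetSum _ fun j _ => (hη j).memLp ⊤).mul' (r := ⊤)
    ((memLp_finsetSum _ fun i _ => ((hξ i).memLp ⊤).mul_const (c i)).mul' (r := ⊤) (hU.memLp ⊤))

lemma variance_sampledKeyTerm [IsProbabilityMeasure μ] (c : α → ℝ) (hU : IsBernoulli U p μ)
    (hξ : ∀ i, IsBernoulli (ξ i) q₁ μ) (hη : ∀ j, IsBernoulli (η j) q₂ μ)
    (hind : iIndepFun (Sum.elim (fun _ : Unit => U) (Sum.elim ξ η)) μ) :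
    variance (sampledKeyTerm U ξ η c) μ
      = p * ((q₁ ^ 2 * (∑ i, c i) ^ 2 + (q₁ - q₁ ^ 2) * ∑ i, c i ^ 2)
          * (q₂ ^ 2 * Fintype.card β ^ 2 + (q₂ - q₂ ^ 2) * Fintype.card β))
        - (p * ((q₁ * ∑ i, c i) * (q₂ * Fintype.card β))) ^ 2 := by
  have hFm : ∀ k, Measurable (Sum.elim (fun _ : Unit => U) (Sum.elim ξ η) k) := by
    rintro (_ | i | j)
    exacts [hU.measurable, (hξ i).measurable, (hη j).measurable]
  set A : Ω → ℝ := fun ω => ∑ i, ξ i ω * c i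
  set B : Ω → ℝ := fun ω => ∑ j, η j ω
  have hAB : A ⟂ᵢ[μ] B :=
    hind.indepFun_of_measurable_iSup hFm (S := Set.range (Sum.inr ∘ Sum.inl))
      (T := Set.range (Sum.inr ∘ Sum.inr)) (by simp [Set.disjoint_range_iff])
      (Finset.measurable_sum _ fun i _ =>
        (measurable_iSup_comap (Set.mem_range_self i)).mul_const _)
      (Finset.measurable_sum _ fun j _ => measurable_iSup_comap (Set.mem_range_self j))
  have hUAB : U ⟂ᵢ[μ] (A * B) :=
    hind.indepFun_of_measurable_iSup hFm (S := Set.range Sum.inl) (T := Set.range Sum.inr)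
      Set.isCompl_range_inl_range_inr.disjoint (measurable_iSup_comap (Set.mem_range_self ()))
      ((Finset.measurable_sum _ fun i _ =>
        (measurable_iSup_comap (Set.mem_range_self (Sum.inl i))).mul_const _).mul
        (Finset.measurable_sum _ fun j _ => measurable_iSup_comap (Set.mem_range_self (Sum.inr j))))
  have hξ_indep : Pairwise fun i j => ξ i ⟂ᵢ[μ] ξ j := fun i j hij =>
    hind.indepFun (i := Sum.inr (Sum.inl i)) (j := Sum.inr (Sum.inl j)) (by simpa using hij)
  have hη_indep : Pairwise fun i j => η i ⟂ᵢ[μ] η j := fun i j hij =>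
    hind.indepFun (i := Sum.inr (Sum.inr i)) (j := Sum.inr (Sum.inr j)) (by simpa using hij)
  have h_eq : sampledKeyTerm U ξ η c = U * (A * B) := by
    ext ω
    simp only [sampledKeyTerm, Pi.mul_apply, mul_assoc, A, B]
  have h_memLp := (memLp_top_sampledKeyTerm c hU hξ hη).mono_exponent (p := 2) le_top
  rw [h_eq] at h_memLp ⊢
  rw [variance_mul_mul_of_indepFun hUAB hAB hU.measurable.aestronglyMeasurable
      (Finset.measurable_sum _ fun i _ => (hξ i).measurable.mul_const _).aestronglyMeasurable
      (Finset.measurable_sum _ fun j _ => (hη j).measurable).aestronglyMeasurable h_memLp,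
    hU.sq_eq, hU.integral_eq, integral_sum_mul_const_of_isBernoulli c hξ,
    integral_sum_mul_const_sq_of_isBernoulli c hξ hξ_indep, integral_sum_of_isBernoulli hη,
    integral_sum_sq_of_isBernoulli hη hη_indep]

end SampledJoin

section UBSFamily

variable {Ω : Type*} [MeasurableSpace Ω] {μ : Measure Ω} {ι : Type*} {α β : ι → Type*}

def ubsFamily (U : ι → Ω → ℝ) (ξ : ∀ v, α v → Ω → ℝ) (η : ∀ v, β v → Ω → ℝ) :
    ι ⊕ (Σ v, α v) ⊕ (Σ v, β v) → Ω → ℝ :=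
  Sum.elim U (Sum.elim (fun k => ξ k.1 k.2) (fun k => η k.1 k.2))

def ubsKey : ι ⊕ (Σ v, α v) ⊕ (Σ v, β v) → ι :=
  Sum.elim id (Sum.elim Sigma.fst Sigma.fst)

variable {U : ι → Ω → ℝ} {ξ : ∀ v, α v → Ω → ℝ} {η : ∀ v, β v → Ω → ℝ}

lemma iIndepFun_key_of_ubsFamily (hind : iIndepFun (ubsFamily U ξ η) μ) (v : ι) :
    iIndepFun (Sum.elim (fun _ : Unit => U v) (Sum.elim (ξ v) (η v))) μ := by
  have h_inj : Function.Injective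
      (Sum.map (fun _ : Unit => v) (Sum.map (Sigma.mk (β := α) v) (Sigma.mk (β := β) v))) :=
    Sum.map_injective.2
      ⟨fun _ _ _ => rfl, Sum.map_injective.2 ⟨sigma_mk_injective, sigma_mk_injective⟩⟩
  convert hind.precomp h_inj using 1
  ext (_ | i | j) <;> rfl

lemma indepFun_sampledKeyTerm_of_ubsFamily [∀ v, Fintype (α v)] [∀ v, Fintype (β v)]
    (hind : iIndepFun (ubsFamily U ξ η) μ) (hm : ∀ k, Measurable (ubsFamily U ξ η k))
    (c : ∀ v, α v → ℝ) {v u : ι} (hvu : v ≠ u) :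
    sampledKeyTerm (U v) (ξ v) (η v) (c v) ⟂ᵢ[μ] sampledKeyTerm (U u) (ξ u) (η u) (c u) := by
  have h_meas (v : ι) : Measurable[⨆ k ∈ ubsKey ⁻¹' {v},
      MeasurableSpace.comap (ubsFamily U ξ η k) inferInstance]
      (sampledKeyTerm (U v) (ξ v) (η v) (c v)) := by
    have hF {k} (hk : ubsKey k = v) := measurable_iSup_comap (F := ubsFamily U ξ η)
      (S := ubsKey ⁻¹' {v}) (k := k) hk
    exact ((hF (k := .inl v) rfl).mul (Finset.measurable_sum _ fun i _ =>
      (hF (k := .inr (.inl ⟨v, i⟩)) rfl).mul_const _)).mul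
      (Finset.measurable_sum _ fun j _ => hF (k := .inr (.inr ⟨v, j⟩)) rfl)
  exact hind.indepFun_of_measurable_iSup hm
    (Disjoint.preimage _ (Set.disjoint_singleton.2 hvu)) (h_meas v) (h_meas u)

end UBSFamily

section Weights

variable {ι : Type*} (a : ι → ℕ) (w : (v : ι) → Fin (a v) → ℝ) (v : ι)

lemma natCast_mul_wMean : (a v : ℝ) * wMean a w v = ∑ i, w v i :=
  Fin.natCast_mul_sum_div _

lemma natCast_mul_wMean_sq_add_wVar :
    (a v : ℝ) * (wMean a w v ^ 2 + wVar a w v) = ∑ i, w v i ^ 2 := by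
  rw [mul_add, wVar, Fin.natCast_mul_sum_div]
  simp only [sub_sq, Finset.sum_add_distrib, Finset.sum_sub_distrib, ← Finset.sum_mul,
    ← Finset.mul_sum, Finset.sum_const, Finset.card_univ, Fintype.card_fin, nsmul_eq_mul]
  rw [← natCast_mul_wMean]
  ring

end Weights

theorem centralized_sum_variance_general
    {Ω : Type*} [MeasurableSpace Ω] (μ : Measure Ω) [IsProbabilityMeasure μ]
    {ι : Type*} [Fintype ι]
    (a b : ι → ℕ) (w : (v : ι) → Fin (a v) → ℝ) (ε₁ ε₂ p q₁ q₂ : ℝ)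
    (hε₁ : 0 < ε₁) (hε₂ : 0 < ε₂)
    (hplb : max ε₁ ε₂ ≤ p)
    (hq₁def : q₁ = ε₁ / p) (hq₂def : q₂ = ε₂ / p)
    (U : ι → Ω → ℝ) (ξ : (v : ι) → Fin (a v) → Ω → ℝ) (η : (v : ι) → Fin (b v) → Ω → ℝ)
    (hUm : ∀ v, Measurable (U v))
    (hξm : ∀ v i, Measurable (ξ v i))
    (hηm : ∀ v j, Measurable (η v j))
    (hU01 : ∀ v ω, U v ω = 0 ∨ U v ω = 1)
    (hξ01 : ∀ v i ω, ξ v i ω = 0 ∨ ξ v i ω = 1)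
    (hη01 : ∀ v j ω, η v j ω = 0 ∨ η v j ω = 1)
    (hUp : ∀ v, μ {ω | U v ω = 1} = ENNReal.ofReal p)
    (hξq : ∀ v i, μ {ω | ξ v i ω = 1} = ENNReal.ofReal q₁)
    (hηq : ∀ v j, μ {ω | η v j ω = 1} = ENNReal.ofReal q₂)
    (hIndep : iIndepFun
      (Sum.elim (fun v : ι => U v)
        (Sum.elim (fun vi : Σ v : ι, Fin (a v) => ξ vi.1 vi.2)
                  (fun vj : Σ v : ι, Fin (b v) => η vj.1 vj.2))) μ) :
    variance (fun ω => (1 / (p * q₁ * q₂)) *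
        ∑ v, U v ω * (∑ i, ξ v i ω * w v i) * (∑ j, η v j ω)) μ
      = (1 / ε₂ - 1 / p) *
          (∑ v, (a v : ℝ) ^ 2 * (wMean a w v) ^ 2 * (b v : ℝ))
        + (1 / ε₁ - 1 / p) *
          (∑ v, (a v : ℝ) * ((wMean a w v) ^ 2 + wVar a w v) * (b v : ℝ) ^ 2)
        + (p / (ε₁ * ε₂) - 1 / ε₁ - 1 / ε₂ + 1 / p) *
          (∑ v, (a v : ℝ) * ((wMean a w v) ^ 2 + wVar a w v) * (b v : ℝ))
        + (1 / p - 1) *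
          (∑ v, (a v : ℝ) ^ 2 * (wMean a w v) ^ 2 * (b v : ℝ) ^ 2) := by
  have hp : 0 < p := hε₁.trans_le ((le_max_left _ _).trans hplb)
  have hq₁ : 0 < q₁ := hq₁def ▸ div_pos hε₁ hp
  have hq₂ : 0 < q₂ := hq₂def ▸ div_pos hε₂ hp
  have hε₁_eq : ε₁ = p * q₁ := by rw [hq₁def]; field_simp
  have hε₂_eq : ε₂ = p * q₂ := by rw [hq₂def]; field_simp
  have hU (v) : IsBernoulli (U v) p μ := .of_measure_eq (hUm v) (hU01 v) hp.le (hUp v)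
  have hξ (v i) : IsBernoulli (ξ v i) q₁ μ := .of_measure_eq (hξm v i) (hξ01 v i) hq₁.le (hξq v i)
  have hη (v j) : IsBernoulli (η v j) q₂ μ := .of_measure_eq (hηm v j) (hη01 v j) hq₂.le (hηq v j)
  have hind : iIndepFun (ubsFamily U ξ η) μ := hIndep
  have hm : ∀ k, Measurable (ubsFamily U ξ η k) := by
    rintro (v | ⟨v, i⟩ | ⟨v, j⟩)
    exacts [hUm v, hξm v i, hηm v j]
  change variance (fun ω => _ * ∑ v, sampledKeyTerm (U v) (ξ v) (η v) (w v) ω) μ = _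
  rw [variance_const_mul, IndepFun.variance_fun_sum
    (fun v => (memLp_top_sampledKeyTerm (w v) (hU v) (hξ v) (hη v)).mono_exponent le_top)
    (fun v u hvu => indepFun_sampledKeyTerm_of_ubsFamily hind hm w hvu)]
  simp only [Finset.mul_sum, ← Finset.sum_add_distrib]
  refine Finset.sum_congr rfl fun v _ => ?_
  rw [variance_sampledKeyTerm (w v) (hU v) (hξ v) (hη v) (iIndepFun_key_of_ubsFamily hind v),
    Fintype.card_fin, ← natCast_mul_wMean, ← natCast_mul_wMean_sq_add_wVar, hε₁_eq, hε₂_eq]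
  field_simp
  ring

/-- **Centralized sum variance.**  In the UBS sum sampling model with universe rate `p`
(`max ε₁ ε₂ ≤ p ≤ 1`) and uniform rates `q₁ = ε₁/p`, `q₂ = ε₂/p`,
`Var(Ĵ_sum) = (1/ε₂ − 1/p)·β₁ + (1/ε₁ − 1/p)·β₂ + (p/(ε₁ε₂) − 1/ε₁ − 1/ε₂ + 1/p)·β₃
+ (1/p − 1)·β₄`. -/
theorem centralized_sum_variance
    {Ω : Type*} [MeasurableSpace Ω] (μ : Measure Ω) [IsProbabilityMeasure μ]
    {ι : Type*} [Fintype ι]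
    (a b : ι → ℕ) (w : (v : ι) → Fin (a v) → ℝ) (ε₁ ε₂ p q₁ q₂ : ℝ)
    (hε₁ : 0 < ε₁) (hε₁1 : ε₁ ≤ 1) (hε₂ : 0 < ε₂) (hε₂1 : ε₂ ≤ 1)
    (hplb : max ε₁ ε₂ ≤ p) (hp1 : p ≤ 1)
    (hq₁def : q₁ = ε₁ / p) (hq₂def : q₂ = ε₂ / p)
    (U : ι → Ω → ℝ) (ξ : (v : ι) → Fin (a v) → Ω → ℝ) (η : (v : ι) → Fin (b v) → Ω → ℝ)
    (hUm : ∀ v, Measurable (U v))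
    (hξm : ∀ v i, Measurable (ξ v i))
    (hηm : ∀ v j, Measurable (η v j))
    (hU01 : ∀ v ω, U v ω = 0 ∨ U v ω = 1)
    (hξ01 : ∀ v i ω, ξ v i ω = 0 ∨ ξ v i ω = 1)
    (hη01 : ∀ v j ω, η v j ω = 0 ∨ η v j ω = 1)
    (hUp : ∀ v, μ {ω | U v ω = 1} = ENNReal.ofReal p)
    (hξq : ∀ v i, μ {ω | ξ v i ω = 1} = ENNReal.ofReal q₁)
    (hηq : ∀ v j, μ {ω | η v j ω = 1} = ENNReal.ofReal q₂)
    (hIndep : iIndepFun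
      (Sum.elim (fun v : ι => U v)
        (Sum.elim (fun vi : Σ v : ι, Fin (a v) => ξ vi.1 vi.2)
                  (fun vj : Σ v : ι, Fin (b v) => η vj.1 vj.2))) μ) :
    variance (fun ω => (1 / (p * q₁ * q₂)) *
        ∑ v, U v ω * (∑ i, ξ v i ω * w v i) * (∑ j, η v j ω)) μ
      = (1 / ε₂ - 1 / p) *
          (∑ v, (a v : ℝ) ^ 2 * (wMean a w v) ^ 2 * (b v : ℝ))
        + (1 / ε₁ - 1 / p) *
          (∑ v, (a v : ℝ) * ((wMean a w v) ^ 2 + wVar a w v) * (b v : ℝ) ^ 2)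
        + (p / (ε₁ * ε₂) - 1 / ε₁ - 1 / ε₂ + 1 / p) *
          (∑ v, (a v : ℝ) * ((wMean a w v) ^ 2 + wVar a w v) * (b v : ℝ))
        + (1 / p - 1) *
          (∑ v, (a v : ℝ) ^ 2 * (wMean a w v) ^ 2 * (b v : ℝ) ^ 2) :=
  centralized_sum_variance_general μ a b w ε₁ ε₂ p q₁ q₂ hε₁ hε₂ hplb hq₁def hq₂def U ξ η hUm hξm
    hηm hU01 hξ01 hη01 hUp hξq hηq hIndep
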